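/- In a strong solution P to the encoded Minsky sequent, the main branch exists and is unique: there is exactly one root-to-leaf path v₀, v₁, …, v_t such that every OUT(P, W₀, v_u) contains a label literal lᵢ (rather than some κₘ), and the associated sequence of configurations K_u with encoding ≅ OUT(P, W₀, v_u) is a valid computation of M from (L₁, k₁, …, kₙ) to (L₀, 0, …, 0). -/

import Mathlib

/-- Simple products of positive literals over `α`, represented as multisets of literals. -/
abbrev SP (α : Type) := Multiset α

/-- Horn implications `X ⊸ Y` and ⊕-Horn implications `X ⊸ (Y₁ ⊕ Y₂)`
over simple products. -/
inductive HF (α : Type) : Type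
  | horn : SP α → SP α → HF α
  | ohorn : SP α → SP α → SP α → HF α

instance {α : Type} [DecidableEq α] : DecidableEq (HF α)
  | HF.horn a b, HF.horn c d =>
      decidable_of_iff (a = c ∧ b = d) (by simp [HF.horn.injEq])
  | HF.horn _ _, HF.ohorn _ _ _ => isFalse (by simp)
  | HF.ohorn _ _ _, HF.horn _ _ => isFalse (by simp)
  | HF.ohorn a b c, HF.ohorn d e f =>
      decidable_of_iff (a = d ∧ b = e ∧ c = f) (by simp [HF.ohorn.injEq])

/-- Tree-like Horn programs: rooted binary trees whose edges are labelled by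
Horn implications; a divergent vertex carries two Horn implications with a
common antecedent `X` (coming from the ⊕-Horn implication `X ⊸ (Y₁ ⊕ Y₂)`). -/
inductive HT (α : Type) : Type
  | leaf : HT α
  | node1 : SP α → SP α → HT α → HT α
  | node2 : SP α → SP α → SP α → HT α → HT α → HT α

/-- `Sol P W Δ Γ Z`: the tree-like Horn program `P` is a strong solution to the
Horn sequent `W, Δ, !Γ ⊢ Z`: every strong-computation value is defined, every
leaf value equals `Z` (as a multiset), every formula used on an edge is drawn
from `Δ` or `Γ`, and on each root-to-leaf path each formula of the linear part
`Δ` is used exactly once (the formula used on the two edges of a divergent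
vertex being the ⊕-Horn implication `X ⊸ (Y₁ ⊕ Y₂)`). -/
def Sol {α : Type} [DecidableEq α] :
    HT α → SP α → Multiset (HF α) → Multiset (HF α) → SP α → Prop
  | HT.leaf, W, Δ, _, Z => W = Z ∧ Δ = 0
  | HT.node1 X Y t, W, Δ, Γ, Z =>
      X ≠ 0 ∧ Y ≠ 0 ∧ X ≤ W ∧
      ((HF.horn X Y ∈ Δ ∧ Sol t (W - X + Y) (Δ.erase (HF.horn X Y)) Γ Z) ∨
       (HF.horn X Y ∈ Γ ∧ Sol t (W - X + Y) Δ Γ Z))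
  | HT.node2 X Y₁ Y₂ t₁ t₂, W, Δ, Γ, Z =>
      X ≠ 0 ∧ Y₁ ≠ 0 ∧ Y₂ ≠ 0 ∧ X ≤ W ∧
      ((HF.ohorn X Y₁ Y₂ ∈ Δ ∧
          Sol t₁ (W - X + Y₁) (Δ.erase (HF.ohorn X Y₁ Y₂)) Γ Z ∧
          Sol t₂ (W - X + Y₂) (Δ.erase (HF.ohorn X Y₁ Y₂)) Γ Z) ∨
       (HF.ohorn X Y₁ Y₂ ∈ Γ ∧
          Sol t₁ (W - X + Y₁) Δ Γ Z ∧
          Sol t₂ (W - X + Y₂) Δ Γ Z))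

/-- The strong-computation value `OUT(P, W, v)` at the vertex addressed by the
path `p` (at a divergent vertex, `false` selects the first child and `true`
the second; a non-divergent vertex is descended by `false`).  `none` means
undefined. -/
def OUT {α : Type} [DecidableEq α] :
    HT α → SP α → List Bool → Option (SP α)
  | _, W, [] => some W
  | HT.leaf, _, _ :: _ => none
  | HT.node1 X Y t, W, false :: p =>
      if X ≤ W then OUT t (W - X + Y) p else none
  | HT.node1 _ _ _, _, true :: _ => none
  | HT.node2 X Y₁ _ t₁ _, W, false :: p =>
      if X ≤ W then OUT t₁ (W - X + Y₁) p else none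
  | HT.node2 X _ Y₂ _ t₂, W, true :: p =>
      if X ≤ W then OUT t₂ (W - X + Y₂) p else none

/-- Literals of the Minsky encoding: `lab i` for the label `Lᵢ`, `reg m` for
the `m`-th counter, and `kap m` for the killer literal `κₘ`. -/
inductive Lit (n : ℕ) : Type
  | lab : ℕ → Lit n
  | reg : Fin n → Lit n
  | kap : Fin n → Lit n
deriving DecidableEq

/-- Instructions of an `n`-counter Minsky machine:
`inc i m j` is `Lᵢ: xₘ := xₘ + 1; goto Lⱼ`,
`dec i m j` is `Lᵢ: xₘ := xₘ - 1; goto Lⱼ`,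
`pos i m j` is `Lᵢ: if xₘ > 0 then goto Lⱼ`,
`zero i m j` is `Lᵢ: if xₘ = 0 then goto Lⱼ`
(the halt instruction is `L₀: halt`, i.e. label `0` carries no instruction). -/
inductive Instr (n : ℕ) : Type
  | inc : ℕ → Fin n → ℕ → Instr n
  | dec : ℕ → Fin n → ℕ → Instr n
  | pos : ℕ → Fin n → ℕ → Instr n
  | zero : ℕ → Fin n → ℕ → Instr n
deriving DecidableEq

/-- The source label of an instruction. -/
def Instr.src {n : ℕ} : Instr n → ℕ
  | Instr.inc i _ _ => i
  | Instr.dec i _ _ => i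
  | Instr.pos i _ _ => i
  | Instr.zero i _ _ => i

/-- A configuration: the current label together with the counter contents. -/
abbrev Config (n : ℕ) := ℕ × (Fin n → ℕ)

/-- One move of the Minsky machine with program `M`. -/
inductive MStep {n : ℕ} (M : List (Instr n)) : Config n → Config n → Prop
  | inc {i : ℕ} {m : Fin n} {j : ℕ} {c : Fin n → ℕ} :
      Instr.inc i m j ∈ M → MStep M (i, c) (j, Function.update c m (c m + 1))
  | dec {i : ℕ} {m : Fin n} {j : ℕ} {c : Fin n → ℕ} :
      Instr.dec i m j ∈ M → 0 < c m →
      MStep M (i, c) (j, Function.update c m (c m - 1))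
  | pos {i : ℕ} {m : Fin n} {j : ℕ} {c : Fin n → ℕ} :
      Instr.pos i m j ∈ M → 0 < c m → MStep M (i, c) (j, c)
  | zero {i : ℕ} {m : Fin n} {j : ℕ} {c : Fin n → ℕ} :
      Instr.zero i m j ∈ M → c m = 0 → MStep M (i, c) (j, c)

/-- `M` can go from one configuration to another (by a finite computation). -/
def Reaches {n : ℕ} (M : List (Instr n)) : Config n → Config n → Prop :=
  Relation.ReflTransGen (MStep M)

/-- The encoding of a configuration `(L, c₁, …, cₙ)` as the multiset of
literals `{l} ∪ {r₁ repeated c₁ times} ∪ … ∪ {rₙ repeated cₙ times}`. -/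
def encC {n : ℕ} (K : Config n) : Multiset (Lit n) :=
  Lit.lab K.1 ::ₘ (Finset.univ.sum fun m : Fin n =>
    Multiset.replicate (K.2 m) (Lit.reg m))

/-- The (⊕-)Horn implication `φ_I` axiomatizing an instruction `I`:
`φ₍₁₎ = lᵢ ⊸ (lⱼ ⊗ rₘ)`, `φ₍₂₎ = (lᵢ ⊗ rₘ) ⊸ lⱼ`,
`φ₍₃₎ = (lᵢ ⊗ rₘ) ⊸ (lⱼ ⊗ rₘ)`, `φ₍₄₎ = lᵢ ⊸ (lⱼ ⊕ κₘ)`. -/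
def phiHF {n : ℕ} : Instr n → HF (Lit n)
  | Instr.inc i m j => HF.horn {Lit.lab i} {Lit.lab j, Lit.reg m}
  | Instr.dec i m j => HF.horn {Lit.lab i, Lit.reg m} {Lit.lab j}
  | Instr.pos i m j => HF.horn {Lit.lab i, Lit.reg m} {Lit.lab j, Lit.reg m}
  | Instr.zero i m j => HF.ohorn {Lit.lab i} {Lit.lab j} {Lit.kap m}

/-- The multiset `Φ_M` of Horn implications axiomatizing the program of `M`. -/
def PhiHF {n : ℕ} (M : List (Instr n)) : Multiset (HF (Lit n)) :=
  (M.map phiHF : List (HF (Lit n)))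

/-- The multiset `𝒦ₘ`: the implication `κₘ ⊸ l₀` together with the killing
implications `(κₘ ⊗ rᵢ) ⊸ κₘ` for `i ≠ m`. -/
def KHFm {n : ℕ} (m : Fin n) : Multiset (HF (Lit n)) :=
  HF.horn {Lit.kap m} {Lit.lab 0} ::ₘ
    ((Finset.univ.erase m).val.map fun i : Fin n =>
      HF.horn {Lit.kap m, Lit.reg i} {Lit.kap m})

/-- The multiset `𝒦 = ⋃ₘ 𝒦ₘ`. -/
def KHF (n : ℕ) : Multiset (HF (Lit n)) :=
  Finset.univ.sum fun m : Fin n => KHFm m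

/-- The subtree of a program rooted at the vertex addressed by path `p`. -/
def subtreeAt {α : Type} : HT α → List Bool → Option (HT α)
  | t, [] => some t
  | HT.leaf, _ :: _ => none
  | HT.node1 _ _ t, false :: p => subtreeAt t p
  | HT.node1 _ _ _, true :: _ => none
  | HT.node2 _ _ _ t₁ _, false :: p => subtreeAt t₁ p
  | HT.node2 _ _ _ _ t₂, true :: p => subtreeAt t₂ p

/-- `p` addresses a terminal (output) vertex of the program. -/
def IsLeafPath {α : Type} (t : HT α) (p : List Bool) : Prop :=
  subtreeAt t p = some HT.leaf

/-- The set of (antecedent, consequent) pairs of the Horn implications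
labelling the edges of a program. -/
def edgePairs {α : Type} : HT α → Set (SP α × SP α)
  | HT.leaf => ∅
  | HT.node1 X Y t => insert (X, Y) (edgePairs t)
  | HT.node2 X Y₁ Y₂ t₁ t₂ =>
      insert (X, Y₁) (insert (X, Y₂) (edgePairs t₁ ∪ edgePairs t₂))

/-- A literal is a counter literal `rᵢ`. -/
def isReg {n : ℕ} : Lit n → Bool
  | Lit.reg _ => true
  | _ => false


namespace MBAux

variable {n : ℕ}

/-- The register part of the encoding. -/
def regs (c : Fin n → ℕ) : Multiset (Lit n) :=
  Finset.univ.sum fun m : Fin n => Multiset.replicate (c m) (Lit.reg m)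

lemma encC_eq (K : Config n) : encC K = Lit.lab K.1 ::ₘ regs K.2 := rfl

lemma count_regs_reg (c : Fin n → ℕ) (m : Fin n) :
    (regs c).count (Lit.reg m) = c m := by
  rw [regs, Multiset.count_sum']
  rw [Finset.sum_eq_single m]
  · simp [Multiset.count_replicate]
  · intro b _ hb
    simp only [Multiset.count_replicate, Lit.reg.injEq]
    rw [if_neg hb]
  · simp

lemma count_regs_lab (c : Fin n → ℕ) (i : ℕ) :
    (regs c).count (Lit.lab i) = 0 := by
  rw [regs, Multiset.count_sum']
  simp [Multiset.count_replicate]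

lemma count_regs_kap (c : Fin n → ℕ) (m : Fin n) :
    (regs c).count (Lit.kap m) = 0 := by
  rw [regs, Multiset.count_sum']
  simp [Multiset.count_replicate]

lemma count_encC_lab (K : Config n) (i : ℕ) :
    (encC K).count (Lit.lab i) = if i = K.1 then 1 else 0 := by
  rw [encC_eq, Multiset.count_cons, count_regs_lab]
  simp [Lit.lab.injEq]

lemma count_encC_reg (K : Config n) (m : Fin n) :
    (encC K).count (Lit.reg m) = K.2 m := by
  rw [encC_eq, Multiset.count_cons, count_regs_reg]
  simp

lemma count_encC_kap (K : Config n) (m : Fin n) :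
    (encC K).count (Lit.kap m) = 0 := by
  rw [encC_eq, Multiset.count_cons, count_regs_kap]
  simp

lemma lab_mem_encC {i : ℕ} {K : Config n} : Lit.lab i ∈ encC K ↔ i = K.1 := by
  rw [← Multiset.count_pos, count_encC_lab]
  split_ifs with h <;> simp [h]

lemma kap_not_mem_encC {m : Fin n} {K : Config n} : Lit.kap m ∉ encC K := by
  rw [← Multiset.count_pos, count_encC_kap]
  simp

lemma reg_mem_encC {m : Fin n} {K : Config n} : Lit.reg m ∈ encC K ↔ 0 < K.2 m := by
  rw [← Multiset.count_pos, count_encC_reg]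

lemma mem_regs (c : Fin n → ℕ) : ∀ x ∈ regs c, ∃ i, x = Lit.reg i := by
  intro x hx
  cases x with
  | reg i => exact ⟨i, rfl⟩
  | lab i => exact absurd (Multiset.count_pos.mpr hx) (by rw [count_regs_lab]; omega)
  | kap m => exact absurd (Multiset.count_pos.mpr hx) (by rw [count_regs_kap]; omega)

end MBAux
namespace MBAux
variable {n : ℕ}

lemma enc_step_inc {i j : ℕ} {m : Fin n} {c : Fin n → ℕ} :
    encC (i, c) - {Lit.lab i} + {Lit.lab j, Lit.reg m}
      = encC (j, Function.update c m (c m + 1)) := by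
  ext a
  cases a with
  | lab i' =>
    simp only [Multiset.count_add, Multiset.count_sub, count_encC_lab,
      Multiset.insert_eq_cons, Multiset.count_cons, Multiset.count_singleton,
      Lit.lab.injEq, reduceCtorEq, if_false]
    split_ifs <;> omega
  | reg m' =>
    simp only [Multiset.count_add, Multiset.count_sub, count_encC_reg,
      Multiset.insert_eq_cons, Multiset.count_cons, Multiset.count_singleton,
      Lit.reg.injEq, reduceCtorEq, if_false, Function.update_apply]
    split_ifs with h
    · subst h; omega
    · omega
  | kap m' =>
    simp only [Multiset.count_add, Multiset.count_sub, count_encC_kap,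
      Multiset.insert_eq_cons, Multiset.count_cons, Multiset.count_singleton,
      reduceCtorEq, if_false]

lemma enc_step_dec {i j : ℕ} {m : Fin n} {c : Fin n → ℕ} (hc : 0 < c m) :
    encC (i, c) - {Lit.lab i, Lit.reg m} + {Lit.lab j}
      = encC (j, Function.update c m (c m - 1)) := by
  ext a
  cases a with
  | lab i' =>
    simp only [Multiset.count_add, Multiset.count_sub, count_encC_lab,
      Multiset.insert_eq_cons, Multiset.count_cons, Multiset.count_singleton,
      Lit.lab.injEq, reduceCtorEq, if_false]
    split_ifs <;> omega
  | reg m' =>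
    simp only [Multiset.count_add, Multiset.count_sub, count_encC_reg,
      Multiset.insert_eq_cons, Multiset.count_cons, Multiset.count_singleton,
      Lit.reg.injEq, reduceCtorEq, if_false, Function.update_apply]
    split_ifs with h
    · subst h; omega
    · omega
  | kap m' =>
    simp only [Multiset.count_add, Multiset.count_sub, count_encC_kap,
      Multiset.insert_eq_cons, Multiset.count_cons, Multiset.count_singleton,
      reduceCtorEq, if_false]

lemma enc_step_pos {i j : ℕ} {m : Fin n} {c : Fin n → ℕ} (hc : 0 < c m) :
    encC (i, c) - {Lit.lab i, Lit.reg m} + {Lit.lab j, Lit.reg m}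
      = encC (j, c) := by
  ext a
  cases a with
  | lab i' =>
    simp only [Multiset.count_add, Multiset.count_sub, count_encC_lab,
      Multiset.insert_eq_cons, Multiset.count_cons, Multiset.count_singleton,
      Lit.lab.injEq, reduceCtorEq, if_false]
    split_ifs <;> omega
  | reg m' =>
    simp only [Multiset.count_add, Multiset.count_sub, count_encC_reg,
      Multiset.insert_eq_cons, Multiset.count_cons, Multiset.count_singleton,
      Lit.reg.injEq, reduceCtorEq, if_false]
    split_ifs with h
    · subst h; omega
    · omega
  | kap m' =>
    simp only [Multiset.count_add, Multiset.count_sub, count_encC_kap,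
      Multiset.insert_eq_cons, Multiset.count_cons, Multiset.count_singleton,
      reduceCtorEq, if_false]

lemma enc_step_zero {i j : ℕ} {c : Fin n → ℕ} :
    encC (i, c) - {Lit.lab i} + {Lit.lab j} = encC (j, c) := by
  ext a
  cases a with
  | lab i' =>
    simp only [Multiset.count_add, Multiset.count_sub, count_encC_lab,
      Multiset.count_singleton, Lit.lab.injEq]
    split_ifs <;> omega
  | reg m' =>
    simp only [Multiset.count_add, Multiset.count_sub, count_encC_reg,
      Multiset.count_singleton, reduceCtorEq, if_false]
    omega
  | kap m' =>
    simp only [Multiset.count_add, Multiset.count_sub, count_encC_kap,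
      Multiset.count_singleton, reduceCtorEq, if_false]

lemma enc_step_kap {i : ℕ} {m : Fin n} {c : Fin n → ℕ} :
    encC (i, c) - {Lit.lab i} + {Lit.kap m} = Lit.kap m ::ₘ regs c := by
  ext a
  cases a with
  | lab i' =>
    simp only [Multiset.count_add, Multiset.count_sub, count_encC_lab,
      Multiset.count_singleton, Multiset.count_cons, count_regs_lab,
      Lit.lab.injEq, reduceCtorEq, if_false]
    split_ifs <;> omega
  | reg m' =>
    simp only [Multiset.count_add, Multiset.count_sub, count_encC_reg,
      Multiset.count_singleton, Multiset.count_cons, count_regs_reg,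
      reduceCtorEq, if_false]
    omega
  | kap m' =>
    simp only [Multiset.count_add, Multiset.count_sub, count_encC_kap,
      Multiset.count_singleton, Multiset.count_cons, count_regs_kap,
      Lit.kap.injEq, reduceCtorEq, if_false]

end MBAux
namespace MBAux
variable {n : ℕ}

lemma horn_mem (M : List (Instr n)) {X Y : SP (Lit n)}
    (h : HF.horn X Y ∈ PhiHF M + KHF n) :
    (∃ i m j, Instr.inc i m j ∈ M ∧ X = {Lit.lab i} ∧ Y = {Lit.lab j, Lit.reg m}) ∨
    (∃ i m j, Instr.dec i m j ∈ M ∧ X = {Lit.lab i, Lit.reg m} ∧ Y = {Lit.lab j}) ∨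
    (∃ i m j, Instr.pos i m j ∈ M ∧ X = {Lit.lab i, Lit.reg m} ∧ Y = {Lit.lab j, Lit.reg m}) ∨
    (∃ m : Fin n, X = {Lit.kap m} ∧ Y = {Lit.lab 0}) ∨
    (∃ m i : Fin n, i ≠ m ∧ X = {Lit.kap m, Lit.reg i} ∧ Y = {Lit.kap m}) := by
  rcases Multiset.mem_add.mp h with h | h
  · rw [PhiHF, Multiset.mem_coe] at h
    obtain ⟨I, hI, hEq⟩ := List.mem_map.mp h
    cases I with
    | inc i m j =>
      rw [phiHF, HF.horn.injEq] at hEq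
      exact Or.inl ⟨i, m, j, hI, hEq.1.symm, hEq.2.symm⟩
    | dec i m j =>
      rw [phiHF, HF.horn.injEq] at hEq
      exact Or.inr (Or.inl ⟨i, m, j, hI, hEq.1.symm, hEq.2.symm⟩)
    | pos i m j =>
      rw [phiHF, HF.horn.injEq] at hEq
      exact Or.inr (Or.inr (Or.inl ⟨i, m, j, hI, hEq.1.symm, hEq.2.symm⟩))
    | zero i m j => exact absurd hEq (by rw [phiHF]; simp)
  · rw [KHF] at h
    obtain ⟨m, -, hm⟩ := Multiset.mem_sum.mp h
    rw [KHFm] at hm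
    rcases Multiset.mem_cons.mp hm with h' | h'
    · rw [HF.horn.injEq] at h'
      exact Or.inr (Or.inr (Or.inr (Or.inl ⟨m, h'.1, h'.2⟩)))
    · obtain ⟨i, hi, hEq⟩ := Multiset.mem_map.mp h'
      rw [HF.horn.injEq] at hEq
      have hne : i ≠ m := (Finset.mem_erase.mp (Finset.mem_val.mp hi)).1
      exact Or.inr (Or.inr (Or.inr (Or.inr ⟨m, i, hne, hEq.1.symm, hEq.2.symm⟩)))

lemma ohorn_mem (M : List (Instr n)) {X Y₁ Y₂ : SP (Lit n)}
    (h : HF.ohorn X Y₁ Y₂ ∈ PhiHF M + KHF n) :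
    ∃ i m j, Instr.zero i m j ∈ M ∧
      X = {Lit.lab i} ∧ Y₁ = {Lit.lab j} ∧ Y₂ = {Lit.kap m} := by
  rcases Multiset.mem_add.mp h with h | h
  · rw [PhiHF, Multiset.mem_coe] at h
    obtain ⟨I, hI, hEq⟩ := List.mem_map.mp h
    cases I with
    | inc i m j => exact absurd hEq (by rw [phiHF]; simp)
    | dec i m j => exact absurd hEq (by rw [phiHF]; simp)
    | pos i m j => exact absurd hEq (by rw [phiHF]; simp)
    | zero i m j =>
      rw [phiHF, HF.ohorn.injEq] at hEq
      exact ⟨i, m, j, hI, hEq.1.symm, hEq.2.1.symm, hEq.2.2.symm⟩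
  · rw [KHF] at h
    obtain ⟨m, -, hm⟩ := Multiset.mem_sum.mp h
    rw [KHFm] at hm
    rcases Multiset.mem_cons.mp hm with h' | h'
    · exact absurd h' (by simp)
    · obtain ⟨i, -, hEq⟩ := Multiset.mem_map.mp h'
      exact absurd hEq (by simp)

end MBAux
namespace MBAux
variable {n : ℕ}

lemma mem_pair_left {α : Type} [DecidableEq α] (a b : α) :
    a ∈ ({a, b} : Multiset α) := by
  rw [Multiset.insert_eq_cons]; exact Multiset.mem_cons_self _ _

lemma mem_pair_right {α : Type} [DecidableEq α] (a b : α) :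
    b ∈ ({a, b} : Multiset α) := by
  rw [Multiset.insert_eq_cons]
  exact Multiset.mem_cons_of_mem (Multiset.mem_singleton_self _)

lemma step1 {M : List (Instr n)} {X Y : SP (Lit n)} {K : Config n}
    (hmem : HF.horn X Y ∈ PhiHF M + KHF n) (hle : X ≤ encC K) :
    ∃ K' : Config n, encC K - X + Y = encC K' ∧ MStep M K K' := by
  obtain ⟨i0, c⟩ := K
  rcases horn_mem M hmem with ⟨i,m,j,hI,hX,hY⟩|⟨i,m,j,hI,hX,hY⟩|⟨i,m,j,hI,hX,hY⟩|⟨m,hX,hY⟩|⟨m,i,hne,hX,hY⟩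
  · subst hX; subst hY
    have hi : i = i0 :=
      lab_mem_encC.mp (Multiset.mem_of_le hle (Multiset.mem_singleton_self _))
    subst hi
    exact ⟨(j, Function.update c m (c m + 1)), enc_step_inc, MStep.inc hI⟩
  · subst hX; subst hY
    have hi : i = i0 := lab_mem_encC.mp (Multiset.mem_of_le hle (by simp))
    have hc : 0 < c m := reg_mem_encC.mp (Multiset.mem_of_le hle (by simp))
    subst hi
    exact ⟨(j, Function.update c m (c m - 1)), enc_step_dec hc, MStep.dec hI hc⟩
  · subst hX; subst hY
    have hi : i = i0 := lab_mem_encC.mp (Multiset.mem_of_le hle (by simp))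
    have hc : 0 < c m := reg_mem_encC.mp (Multiset.mem_of_le hle (by simp))
    subst hi
    exact ⟨(j, c), enc_step_pos hc, MStep.pos hI hc⟩
  · subst hX
    exact absurd (Multiset.mem_of_le hle (Multiset.mem_singleton_self _)) kap_not_mem_encC
  · subst hX
    exact absurd (Multiset.mem_of_le hle (mem_pair_left _ _)) kap_not_mem_encC

lemma step2 {M : List (Instr n)} {X Y₁ Y₂ : SP (Lit n)} {K : Config n}
    (hmem : HF.ohorn X Y₁ Y₂ ∈ PhiHF M + KHF n) (hle : X ≤ encC K) :
    ∃ (m : Fin n) (j : ℕ), Instr.zero K.1 m j ∈ M ∧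
      encC K - X + Y₁ = encC (j, K.2) ∧
      encC K - X + Y₂ = Lit.kap m ::ₘ regs K.2 := by
  obtain ⟨i0, c⟩ := K
  obtain ⟨i, m, j, hI, hX, hY₁, hY₂⟩ := ohorn_mem M hmem
  subst hX; subst hY₁; subst hY₂
  have hi : i = i0 :=
    lab_mem_encC.mp (Multiset.mem_of_le hle (Multiset.mem_singleton_self _))
  subst hi
  exact ⟨m, j, hI, enc_step_zero, enc_step_kap⟩

lemma no_lab_of_regs {R : Multiset (Lit n)} (hR : ∀ x ∈ R, ∃ i, x = Lit.reg i)
    {m : Fin n} {i : ℕ} : Lit.lab i ∉ (Lit.kap m ::ₘ R) := by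
  intro h
  rcases Multiset.mem_cons.mp h with h | h
  · cases h
  · obtain ⟨j, hj⟩ := hR _ h; cases hj

/-- Once at `l₀` with only registers left, the program must stop and the
registers must be exhausted. -/
lemma halt (M : List (Instr n)) (hSrc : ∀ I ∈ M, 1 ≤ I.src)
    (t : HT (Lit n)) (R : Multiset (Lit n))
    (hR : ∀ x ∈ R, ∃ i, x = Lit.reg i)
    (h : Sol t (Lit.lab 0 ::ₘ R) 0 (PhiHF M + KHF n) {Lit.lab 0}) : R = 0 := by
  have hlab : ∀ i : ℕ, 1 ≤ i → Lit.lab i ∉ (Lit.lab 0 ::ₘ R) := by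
    intro i hi h'
    rcases Multiset.mem_cons.mp h' with h' | h'
    · rw [Lit.lab.injEq] at h'; omega
    · obtain ⟨j, hj⟩ := hR _ h'; cases hj
  have hkap : ∀ m : Fin n, Lit.kap m ∉ (Lit.lab 0 ::ₘ R) := by
    intro m h'
    rcases Multiset.mem_cons.mp h' with h' | h'
    · cases h'
    · obtain ⟨j, hj⟩ := hR _ h'; cases hj
  cases t with
  | leaf =>
    obtain ⟨h1, -⟩ := h
    have : Lit.lab 0 ::ₘ R = Lit.lab 0 ::ₘ 0 := h1
    exact (Multiset.cons_inj_right _).mp this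
  | node1 X Y t =>
    obtain ⟨-, -, hle, h'⟩ := h
    have hmem : HF.horn X Y ∈ PhiHF M + KHF n := by
      rcases h' with ⟨hm, -⟩ | ⟨hm, -⟩
      · exact absurd hm (Multiset.notMem_zero _)
      · exact hm
    rcases horn_mem M hmem with ⟨i,m,j,hI,hX,hY⟩|⟨i,m,j,hI,hX,hY⟩|⟨i,m,j,hI,hX,hY⟩|⟨m,hX,hY⟩|⟨m,i,hne,hX,hY⟩
    · subst hX
      exact absurd (Multiset.mem_of_le hle (Multiset.mem_singleton_self _))
        (hlab i (hSrc _ hI))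
    · subst hX
      exact absurd (Multiset.mem_of_le hle (mem_pair_left _ _)) (hlab i (hSrc _ hI))
    · subst hX
      exact absurd (Multiset.mem_of_le hle (mem_pair_left _ _)) (hlab i (hSrc _ hI))
    · subst hX
      exact absurd (Multiset.mem_of_le hle (Multiset.mem_singleton_self _)) (hkap m)
    · subst hX
      exact absurd (Multiset.mem_of_le hle (mem_pair_left _ _)) (hkap m)
  | node2 X Y₁ Y₂ t₁ t₂ =>
    obtain ⟨-, -, -, hle, h'⟩ := h
    have hmem : HF.ohorn X Y₁ Y₂ ∈ PhiHF M + KHF n := by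
      rcases h' with ⟨hm, -⟩ | ⟨hm, -⟩
      · exact absurd hm (Multiset.notMem_zero _)
      · exact hm
    obtain ⟨i, m, j, hI, hX, -, -⟩ := ohorn_mem M hmem
    subst hX
    exact absurd (Multiset.mem_of_le hle (Multiset.mem_singleton_self _))
      (hlab i (hSrc _ hI))

/-- The killing chain: if the value is `κₘ` plus registers and the program is
a strong solution, then register `m` must be empty. -/
lemma kill (M : List (Instr n)) (hSrc : ∀ I ∈ M, 1 ≤ I.src)
    (t : HT (Lit n)) (m : Fin n) :
    ∀ R : Multiset (Lit n), (∀ x ∈ R, ∃ i, x = Lit.reg i) →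
      Sol t (Lit.kap m ::ₘ R) 0 (PhiHF M + KHF n) {Lit.lab 0} →
      R.count (Lit.reg m) = 0 := by
  induction t with
  | leaf =>
    intro R hR h
    obtain ⟨h1, -⟩ := h
    have : Lit.kap m ∈ ({Lit.lab 0} : Multiset (Lit n)) := h1 ▸ Multiset.mem_cons_self _ _
    simp at this
  | node1 X Y t ih =>
    intro R hR h
    obtain ⟨-, -, hle, h'⟩ := h
    obtain ⟨hmem, hsol⟩ : HF.horn X Y ∈ PhiHF M + KHF n ∧ _ := by
      rcases h' with ⟨hm, -⟩ | ⟨hm, hs⟩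
      · exact absurd hm (Multiset.notMem_zero _)
      · exact ⟨hm, hs⟩
    have hkapmem : ∀ m' : Fin n, Lit.kap m' ∈ (Lit.kap m ::ₘ R) → m' = m := by
      intro m' h'
      rcases Multiset.mem_cons.mp h' with h' | h'
      · injection h' with h''
      · obtain ⟨j, hj⟩ := hR _ h'; cases hj
    rcases horn_mem M hmem with ⟨i,mm,j,hI,hX,hY⟩|⟨i,mm,j,hI,hX,hY⟩|⟨i,mm,j,hI,hX,hY⟩|⟨m',hX,hY⟩|⟨m',i,hne,hX,hY⟩
    · subst hX
      exact absurd (Multiset.mem_of_le hle (Multiset.mem_singleton_self _))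
        (no_lab_of_regs hR)
    · subst hX
      exact absurd (Multiset.mem_of_le hle (mem_pair_left _ _)) (no_lab_of_regs hR)
    · subst hX
      exact absurd (Multiset.mem_of_le hle (mem_pair_left _ _)) (no_lab_of_regs hR)
    · -- κₘ ⊸ l₀ : the chain ends; the subtree must halt with no registers left
      subst hX; subst hY
      have hm' : m' = m := hkapmem m' (Multiset.mem_of_le hle (Multiset.mem_singleton_self _))
      subst hm'
      have hW : (Lit.kap m' ::ₘ R) - {Lit.kap m'} + {Lit.lab 0} = Lit.lab 0 ::ₘ R := by
        ext a
        simp only [Multiset.count_add, Multiset.count_sub, Multiset.count_cons,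
          Multiset.count_singleton]
        split_ifs <;> omega
      rw [hW] at hsol
      rw [halt M hSrc t R hR hsol]
      simp
    · -- (κₘ ⊗ rᵢ) ⊸ κₘ : consume one register rᵢ (i ≠ m) and continue
      subst hX; subst hY
      have hm' : m' = m := hkapmem m' (Multiset.mem_of_le hle (mem_pair_left _ _))
      subst hm'
      have hir : Lit.reg i ∈ R := by
        have : Lit.reg i ∈ (Lit.kap m' ::ₘ R) := Multiset.mem_of_le hle (mem_pair_right _ _)
        rcases Multiset.mem_cons.mp this with h'' | h''
        · cases h''
        · exact h''
      have hcount : 1 ≤ R.count (Lit.reg i) := Multiset.one_le_count_iff_mem.mpr hir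
      have hW : (Lit.kap m' ::ₘ R) - {Lit.kap m', Lit.reg i} + {Lit.kap m'}
          = Lit.kap m' ::ₘ (R - {Lit.reg i}) := by
        ext a
        simp only [Multiset.count_add, Multiset.count_sub, Multiset.count_cons,
          Multiset.count_singleton, Multiset.insert_eq_cons]
        by_cases h1 : a = Lit.reg i
        · subst h1
          simp only [reduceCtorEq, if_false, if_pos rfl]
          omega
        · split_ifs <;> omega
      rw [hW] at hsol
      have hR' : ∀ x ∈ R - {Lit.reg i}, ∃ j, x = Lit.reg j :=
        fun x hx => hR x (Multiset.mem_of_le (Multiset.sub_le_self _ _) hx)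
      have := ih (R - {Lit.reg i}) hR' hsol
      rw [Multiset.count_sub, Multiset.count_singleton] at this
      have hne' : ¬ (Lit.reg m' = Lit.reg i) := by
        intro hh; injection hh with hh; exact hne hh.symm
      rw [if_neg hne'] at this
      omega
  | node2 X Y₁ Y₂ t₁ t₂ ih₁ ih₂ =>
    intro R hR h
    obtain ⟨-, -, -, hle, h'⟩ := h
    have hmem : HF.ohorn X Y₁ Y₂ ∈ PhiHF M + KHF n := by
      rcases h' with ⟨hm, -⟩ | ⟨hm, -⟩
      · exact absurd hm (Multiset.notMem_zero _)
      · exact hm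
    obtain ⟨i, mm, j, hI, hX, -, -⟩ := ohorn_mem M hmem
    subst hX
    exact absurd (Multiset.mem_of_le hle (Multiset.mem_singleton_self _))
      (no_lab_of_regs hR)

end MBAux
namespace MBAux
variable {n : ℕ}

lemma main_ex (M : List (Instr n)) (hSrc : ∀ I ∈ M, 1 ≤ I.src) :
    ∀ (t : HT (Lit n)) (K : Config n),
      Sol t (encC K) 0 (PhiHF M + KHF n) {Lit.lab 0} →
      ∃ (p : List Bool) (f : ℕ → Config n),
        IsLeafPath t p ∧ f 0 = K ∧ f p.length = (0, fun _ => 0) ∧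
        (∀ u ≤ p.length, OUT t (encC K) (p.take u) = some (encC (f u))) ∧
        (∀ u < p.length, MStep M (f u) (f (u + 1))) := by
  intro t
  induction t with
  | leaf =>
    intro K h
    obtain ⟨h1, -⟩ := h
    have hK : K = (0, fun _ => 0) := by
      obtain ⟨i0, c⟩ := K
      have h0 : i0 = 0 := by
        by_contra hh
        have := congrArg (Multiset.count (Lit.lab i0)) h1
        rw [count_encC_lab, Multiset.count_singleton, if_pos rfl,
          if_neg (by simp only [Lit.lab.injEq]; exact hh)] at this
        exact one_ne_zero this
      have hc : c = fun _ => 0 := by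
        funext m
        have := congrArg (Multiset.count (Lit.reg m)) h1
        rw [count_encC_reg, Multiset.count_singleton] at this
        simpa using this
      rw [h0, hc]
    refine ⟨[], fun _ => K, rfl, rfl, hK, ?_, by simp⟩
    intro u hu
    obtain rfl := Nat.le_zero.mp hu
    exact rfl
  | node1 X Y t ih =>
    intro K h
    obtain ⟨-, -, hle, h'⟩ := h
    obtain ⟨hmem, hsol⟩ : HF.horn X Y ∈ PhiHF M + KHF n ∧ _ := by
      rcases h' with ⟨hm, -⟩ | ⟨hm, hs⟩
      · exact absurd hm (Multiset.notMem_zero _)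
      · exact ⟨hm, hs⟩
    obtain ⟨K', hW, hstep⟩ := step1 hmem hle
    rw [hW] at hsol
    obtain ⟨p, f, hp, hf0, hfl, hout, hms⟩ := ih K' hsol
    refine ⟨false :: p, fun u => Nat.casesOn u K f, hp, rfl, hfl, ?_, ?_⟩
    · intro u hu
      cases u with
      | zero => exact rfl
      | succ u =>
        rw [List.take_succ_cons]
        show (if X ≤ encC K then OUT t (encC K - X + Y) (p.take u) else none) = _
        rw [if_pos hle, hW]
        exact hout u (by simpa using hu)
    · intro u hu
      cases u with
      | zero => show MStep M K (f 0); rw [hf0]; exact hstep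
      | succ u => exact hms u (by simpa using hu)
  | node2 X Y₁ Y₂ t₁ t₂ ih₁ ih₂ =>
    intro K h
    obtain ⟨-, -, -, hle, h'⟩ := h
    obtain ⟨hmem, hsol₁, hsol₂⟩ :
        HF.ohorn X Y₁ Y₂ ∈ PhiHF M + KHF n ∧ _ ∧ _ := by
      rcases h' with ⟨hm, -, -⟩ | ⟨hm, hs₁, hs₂⟩
      · exact absurd hm (Multiset.notMem_zero _)
      · exact ⟨hm, hs₁, hs₂⟩
    obtain ⟨m, j, hI, hW₁, hW₂⟩ := step2 hmem hle
    rw [hW₁] at hsol₁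
    rw [hW₂] at hsol₂
    have hzero : K.2 m = 0 := by
      have := kill M hSrc t₂ m (regs K.2) (mem_regs K.2) hsol₂
      rwa [count_regs_reg] at this
    have hstep : MStep M K (j, K.2) := MStep.zero hI hzero
    obtain ⟨p, f, hp, hf0, hfl, hout, hms⟩ := ih₁ (j, K.2) hsol₁
    refine ⟨false :: p, fun u => Nat.casesOn u K f, hp, rfl, hfl, ?_, ?_⟩
    · intro u hu
      cases u with
      | zero => exact rfl
      | succ u =>
        rw [List.take_succ_cons]
        show (if X ≤ encC K then OUT t₁ (encC K - X + Y₁) (p.take u) else none) = _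
        rw [if_pos hle, hW₁]
        exact hout u (by simpa using hu)
    · intro u hu
      cases u with
      | zero => show MStep M K (f 0); rw [hf0]; exact hstep
      | succ u => exact hms u (by simpa using hu)

end MBAux
namespace MBAux
variable {n : ℕ}

lemma OUT_nil {α : Type} [DecidableEq α] (t : HT α) (W : SP α) :
    OUT t W [] = some W := by cases t <;> rfl

lemma main_uniq (M : List (Instr n)) (hSrc : ∀ I ∈ M, 1 ≤ I.src) :
    ∀ (t : HT (Lit n)) (K : Config n) (p₁ p₂ : List Bool),
      Sol t (encC K) 0 (PhiHF M + KHF n) {Lit.lab 0} →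
      IsLeafPath t p₁ →
      (∀ q, q <+: p₁ → ∃ U, OUT t (encC K) q = some U ∧ ∃ i : ℕ, Lit.lab i ∈ U) →
      IsLeafPath t p₂ →
      (∀ q, q <+: p₂ → ∃ U, OUT t (encC K) q = some U ∧ ∃ i : ℕ, Lit.lab i ∈ U) →
      p₁ = p₂ := by
  intro t
  induction t with
  | leaf =>
    intro K p₁ p₂ _ h1 _ h2 _
    have hforce : ∀ p : List Bool, IsLeafPath (HT.leaf : HT (Lit n)) p → p = [] := by
      intro p hp
      cases p with
      | nil => rfl
      | cons b q =>
        exact absurd hp (by cases b <;> simp [IsLeafPath, subtreeAt])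
    rw [hforce p₁ h1, hforce p₂ h2]
  | node1 X Y t ih =>
    intro K p₁ p₂ h h1 hpre1 h2 hpre2
    obtain ⟨-, -, hle, h'⟩ := h
    obtain ⟨hmem, hsol⟩ : HF.horn X Y ∈ PhiHF M + KHF n ∧ _ := by
      rcases h' with ⟨hm, -⟩ | ⟨hm, hs⟩
      · exact absurd hm (Multiset.notMem_zero _)
      · exact ⟨hm, hs⟩
    obtain ⟨K', hW, -⟩ := step1 hmem hle
    rw [hW] at hsol
    have hforce : ∀ p : List Bool, IsLeafPath (HT.node1 X Y t) p →
        ∃ q, p = false :: q := by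
      intro p hp
      cases p with
      | nil => exact absurd hp (by simp [IsLeafPath, subtreeAt])
      | cons b q =>
        cases b with
        | false => exact ⟨q, rfl⟩
        | true => exact absurd hp (by simp [IsLeafPath, subtreeAt])
    obtain ⟨q₁, rfl⟩ := hforce p₁ h1
    obtain ⟨q₂, rfl⟩ := hforce p₂ h2
    have hOUT : ∀ q' : List Bool,
        OUT (HT.node1 X Y t) (encC K) (false :: q') = OUT t (encC K') q' := by
      intro q'
      show (if X ≤ encC K then OUT t (encC K - X + Y) q' else none) = _
      rw [if_pos hle, hW]
    have trans : ∀ q : List Bool,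
        (∀ q', q' <+: (false :: q) →
          ∃ U, OUT (HT.node1 X Y t) (encC K) q' = some U ∧ ∃ i : ℕ, Lit.lab i ∈ U) →
        (∀ q', q' <+: q → ∃ U, OUT t (encC K') q' = some U ∧ ∃ i : ℕ, Lit.lab i ∈ U) := by
      intro q hq q' hq'
      obtain ⟨U, hU, hU'⟩ := hq (false :: q') (List.cons_prefix_cons.mpr ⟨rfl, hq'⟩)
      exact ⟨U, by rw [← hOUT q']; exact hU, hU'⟩
    have hl1 : IsLeafPath t q₁ := h1
    have hl2 : IsLeafPath t q₂ := h2
    rw [ih K' q₁ q₂ hsol hl1 (trans q₁ hpre1) hl2 (trans q₂ hpre2)]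
  | node2 X Y₁ Y₂ t₁ t₂ ih₁ ih₂ =>
    intro K p₁ p₂ h h1 hpre1 h2 hpre2
    obtain ⟨-, -, -, hle, h'⟩ := h
    obtain ⟨hmem, hsol₁, hsol₂⟩ :
        HF.ohorn X Y₁ Y₂ ∈ PhiHF M + KHF n ∧ _ ∧ _ := by
      rcases h' with ⟨hm, -, -⟩ | ⟨hm, hs₁, hs₂⟩
      · exact absurd hm (Multiset.notMem_zero _)
      · exact ⟨hm, hs₁, hs₂⟩
    obtain ⟨m, j, hI, hW₁, hW₂⟩ := step2 hmem hle
    rw [hW₁] at hsol₁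
    have hforce : ∀ p : List Bool, IsLeafPath (HT.node2 X Y₁ Y₂ t₁ t₂) p →
        (∀ q, q <+: p →
          ∃ U, OUT (HT.node2 X Y₁ Y₂ t₁ t₂) (encC K) q = some U ∧
            ∃ i : ℕ, Lit.lab i ∈ U) →
        ∃ q, p = false :: q := by
      intro p hp hpre
      cases p with
      | nil => exact absurd hp (by simp [IsLeafPath, subtreeAt])
      | cons b q =>
        cases b with
        | false => exact ⟨q, rfl⟩
        | true =>
          exfalso
          obtain ⟨U, hU, i, hi⟩ := hpre [true] ⟨q, rfl⟩
          have : OUT (HT.node2 X Y₁ Y₂ t₁ t₂) (encC K) [true]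
              = some (Lit.kap m ::ₘ regs K.2) := by
            show (if X ≤ encC K then OUT t₂ (encC K - X + Y₂) [] else none) = _
            rw [if_pos hle, hW₂, OUT_nil]
          rw [this] at hU
          obtain rfl := Option.some_injective _ hU
          exact no_lab_of_regs (mem_regs K.2) hi
    obtain ⟨q₁, rfl⟩ := hforce p₁ h1 hpre1
    obtain ⟨q₂, rfl⟩ := hforce p₂ h2 hpre2
    have hOUT : ∀ q' : List Bool,
        OUT (HT.node2 X Y₁ Y₂ t₁ t₂) (encC K) (false :: q')
          = OUT t₁ (encC (j, K.2)) q' := by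
      intro q'
      show (if X ≤ encC K then OUT t₁ (encC K - X + Y₁) q' else none) = _
      rw [if_pos hle, hW₁]
    have trans : ∀ q : List Bool,
        (∀ q', q' <+: (false :: q) →
          ∃ U, OUT (HT.node2 X Y₁ Y₂ t₁ t₂) (encC K) q' = some U ∧
            ∃ i : ℕ, Lit.lab i ∈ U) →
        (∀ q', q' <+: q →
          ∃ U, OUT t₁ (encC (j, K.2)) q' = some U ∧ ∃ i : ℕ, Lit.lab i ∈ U) := by
      intro q hq q' hq'
      obtain ⟨U, hU, hU'⟩ := hq (false :: q') (List.cons_prefix_cons.mpr ⟨rfl, hq'⟩)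
      exact ⟨U, by rw [← hOUT q']; exact hU, hU'⟩
    have hl1 : IsLeafPath t₁ q₁ := h1
    have hl2 : IsLeafPath t₁ q₂ := h2
    rw [ih₁ (j, K.2) q₁ q₂ hsol₁ hl1 (trans q₁ hpre1) hl2 (trans q₂ hpre2)]

end MBAux

/-- in a strong solution `P` (over `Φ_M ∪ 𝒦`) to the encoded
Minsky sequent, the main branch exists and is unique: there is exactly one
root-to-leaf path all of whose vertices carry a value containing a label
literal `lᵢ` (rather than some `κₘ`), and the associated sequence of
configurations is a valid computation of `M` from `(L₁, k₁, …, kₙ)` to the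
halting configuration `(L₀, 0, …, 0)`. -/
theorem main_branch {n : ℕ} (M : List (Instr n)) (k : Fin n → ℕ)
    (P : HT (Lit n))
    (hSrc : ∀ I ∈ M, 1 ≤ I.src)
    (hSol : Sol P (encC (1, k)) 0 (PhiHF M + KHF n) {Lit.lab 0}) :
    ∃! p : List Bool,
      IsLeafPath P p ∧
      (∀ q : List Bool, q <+: p →
        ∃ U : Multiset (Lit n),
          OUT P (encC (1, k)) q = some U ∧ ∃ i : ℕ, Lit.lab i ∈ U) ∧
      ∃ K : ℕ → Config n,
        K 0 = (1, k) ∧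
        K p.length = (0, fun _ => 0) ∧
        (∀ u ≤ p.length, OUT P (encC (1, k)) (p.take u) = some (encC (K u))) ∧
        (∀ u < p.length, MStep M (K u) (K (u + 1))) := by
  obtain ⟨p, f, hleaf, hf0, hfl, hout, hstep⟩ := MBAux.main_ex M hSrc P (1, k) hSol
  have hpre : ∀ q : List Bool, q <+: p →
      ∃ U : Multiset (Lit n),
        OUT P (encC (1, k)) q = some U ∧ ∃ i : ℕ, Lit.lab i ∈ U := by
    intro q hq
    refine ⟨encC (f q.length), ?_, (f q.length).1, ?_⟩
    · have h1 := hout q.length hq.length_le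
      rwa [← List.prefix_iff_eq_take.mp hq] at h1
    · rw [MBAux.encC_eq]
      exact Multiset.mem_cons_self _ _
  refine ⟨p, ⟨hleaf, hpre, f, hf0, hfl, hout, hstep⟩, ?_⟩
  rintro p' ⟨hleaf', hpre', -⟩
  exact MBAux.main_uniq M hSrc P (1, k) p' p hSol hleaf' hpre' hleaf hpre
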